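/- If y·x' is a blockchain (a chunk with no unspent inputs) and y·x·x' is a blockchain, then the chunks x and x' commute. -/
import Mathlib


/-- An (idealised E)UTxO transaction: a finite set of inputs (position, key),
a finite set of outputs (position, data, validator), not both empty.
Positions (atoms) are modelled by natural numbers. -/
structure Tx (α β V : Type) where
  inputs : Set (ℕ × α)
  outputs : Set (ℕ × β × V)
  fin_inputs : inputs.Finite
  fin_outputs : outputs.Finite
  nontrivial : inputs.Nonempty ∨ outputs.Nonempty

/-- `val v d tx i` : validator `v`, carrying state data `d`, validates the
pointed transaction `tx @ i` (a transaction `tx` with distinguished input `i`). -/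
def IsChunk {α β V : Type} (val : V → β → Tx α β V → (ℕ × α) → Prop)
    (txs : List (Tx α β V)) : Prop :=
  (∀ m n (hm : m < txs.length) (hn : n < txs.length),
      ∀ o ∈ (txs.get ⟨m, hm⟩).outputs, ∀ o' ∈ (txs.get ⟨n, hn⟩).outputs,
        o.1 = o'.1 → m = n ∧ o = o') ∧
  (∀ m n (hm : m < txs.length) (hn : n < txs.length),
      ∀ i ∈ (txs.get ⟨m, hm⟩).inputs, ∀ i' ∈ (txs.get ⟨n, hn⟩).inputs,
        i.1 = i'.1 → m = n ∧ i = i') ∧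
  (∀ m n (hm : m < txs.length) (hn : n < txs.length),
      ∀ i ∈ (txs.get ⟨m, hm⟩).inputs, ∀ o ∈ (txs.get ⟨n, hn⟩).outputs,
        i.1 = o.1 → n < m ∧ val o.2.2 o.2.1 (txs.get ⟨m, hm⟩) i)

/-- Input positions of a transaction. -/
def inputPos {α β V : Type} (tx : Tx α β V) : Set ℕ := {a | ∃ i ∈ tx.inputs, i.1 = a}

/-- Output positions of a transaction. -/
def outputPos {α β V : Type} (tx : Tx α β V) : Set ℕ := {a | ∃ o ∈ tx.outputs, o.1 = a}

/-- Positions of a transaction. -/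
def posTx {α β V : Type} (tx : Tx α β V) : Set ℕ := inputPos tx ∪ outputPos tx

/-- Positions of a list of transactions. -/
def posList {α β V : Type} (txs : List (Tx α β V)) : Set ℕ :=
  {a | ∃ tx ∈ txs, a ∈ posTx tx}

/-- Unspent transaction inputs: positions of inputs not pointing to an earlier output. -/
def utxi {α β V : Type} (txs : List (Tx α β V)) : Set ℕ :=
  {a | ∃ m, ∃ hm : m < txs.length, ∃ i ∈ (txs.get ⟨m, hm⟩).inputs, i.1 = a ∧
        ∀ n, ∀ hn : n < txs.length, n < m →
          ∀ o ∈ (txs.get ⟨n, hn⟩).outputs, o.1 ≠ a}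

/-- Unspent transaction outputs: positions of outputs not pointed to by a later input. -/
def utxo {α β V : Type} (txs : List (Tx α β V)) : Set ℕ :=
  {a | ∃ n, ∃ hn : n < txs.length, ∃ o ∈ (txs.get ⟨n, hn⟩).outputs, o.1 = a ∧
        ∀ m, ∀ hm : m < txs.length, n < m →
          ∀ i ∈ (txs.get ⟨m, hm⟩).inputs, i.1 ≠ a}

/-- Spent transaction channels: positions of outputs pointed to by a later input. -/
def stx {α β V : Type} (txs : List (Tx α β V)) : Set ℕ :=
  {a | ∃ n, ∃ hn : n < txs.length, ∃ o ∈ (txs.get ⟨n, hn⟩).outputs, o.1 = a ∧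
        ∃ m, ∃ hm : m < txs.length, n < m ∧
          ∃ i ∈ (txs.get ⟨m, hm⟩).inputs, i.1 = a}

/-- Chunks `x` and `x'` commute: `x ++ x'` and `x' ++ x` have the same validity
behaviour in every context. -/
def Commuting {α β V : Type} (val : V → β → Tx α β V → (ℕ × α) → Prop)
    (x x' : List (Tx α β V)) : Prop :=
  ∀ z : List (Tx α β V),
    (IsChunk val ((x ++ x') ++ z) ↔ IsChunk val ((x' ++ x) ++ z)) ∧
    (IsChunk val (z ++ (x ++ x')) ↔ IsChunk val (z ++ (x' ++ x)))

variable {α β V : Type}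



section Aux
variable {T : Type*}

/-- index map from positions of `a++x'++x++b` to positions of `a++x++x'++b` -/
def swapIdx (A X X' n : ℕ) : ℕ :=
  if n < A then n else if n < A + X' then n + X
  else if n < A + X' + X then n - X' else n

lemma swapIdx_inj {A X X' m n : ℕ}
    (h : swapIdx A X X' m = swapIdx A X X' n) : m = n := by
  unfold swapIdx at h; split_ifs at h <;> omega

lemma swapIdx_order {A X X' m n : ℕ}
    (h : swapIdx A X X' n < swapIdx A X X' m) :
    n < m ∨ (A + X' ≤ n ∧ n < A + X' + X ∧ A ≤ m ∧ m < A + X') := by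
  unfold swapIdx at h; split_ifs at h <;> omega

lemma get4_a (a x x' b : List T) {n : ℕ} (h : n < a.length)
    {hh : n < (a ++ x ++ x' ++ b).length} :
    (a ++ x ++ x' ++ b)[n] = a[n] := by
  rw [List.getElem_append_left (by simp; omega),
      List.getElem_append_left (by simp; omega),
      List.getElem_append_left h]

lemma get4_x (a x x' b : List T) {n : ℕ} (h1 : a.length ≤ n)
    (h2 : n < a.length + x.length)
    {hh : n < (a ++ x ++ x' ++ b).length} :
    (a ++ x ++ x' ++ b)[n] = x[n - a.length]'(by omega) := by
  rw [List.getElem_append_left (by simp; omega),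
      List.getElem_append_left (by simp; omega),
      List.getElem_append_right h1]

lemma get4_x' (a x x' b : List T) {n : ℕ} (h1 : a.length + x.length ≤ n)
    (h2 : n < a.length + x.length + x'.length)
    {hh : n < (a ++ x ++ x' ++ b).length} :
    (a ++ x ++ x' ++ b)[n] = x'[n - (a.length + x.length)]'(by omega) := by
  rw [List.getElem_append_left (by simp; omega),
      List.getElem_append_right (by simp; omega)]
  simp

lemma get4_b (a x x' b : List T) {n : ℕ}
    (h1 : a.length + x.length + x'.length ≤ n)
    {hh : n < (a ++ x ++ x' ++ b).length} :
    (a ++ x ++ x' ++ b)[n] =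
      b[n - (a.length + (x.length + x'.length))]'(by simp at hh; omega) := by
  rw [List.getElem_append_right (by simp; omega)]
  simp

lemma get3_a (a x d : List T) {n : ℕ} (h : n < a.length)
    {hh : n < (a ++ x ++ d).length} :
    (a ++ x ++ d)[n] = a[n] := by
  rw [List.getElem_append_left (by simp; omega), List.getElem_append_left h]

lemma get3_x (a x d : List T) {n : ℕ} (h1 : a.length ≤ n)
    (h2 : n < a.length + x.length)
    {hh : n < (a ++ x ++ d).length} :
    (a ++ x ++ d)[n] = x[n - a.length]'(by omega) := by
  rw [List.getElem_append_left (by simp; omega), List.getElem_append_right h1]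

lemma get3_d (a x d : List T) {n : ℕ} (h1 : a.length + x.length ≤ n)
    {hh : n < (a ++ x ++ d).length} :
    (a ++ x ++ d)[n] = d[n - (a.length + x.length)]'(by simp at hh; omega) := by
  rw [List.getElem_append_right (by simp; omega)]
  simp

end Aux

section Aux2
variable {T : Type*}

lemma swapIdx_lt {A X X' B n : ℕ} (h : n < A + X' + X + B) :
    swapIdx A X X' n < A + X + X' + B := by
  unfold swapIdx; split_ifs <;> omega

lemma getElem_swapIdx (a x x' b : List T) {n : ℕ}
    (hn : n < (a ++ x' ++ x ++ b).length)
    {hh : swapIdx a.length x.length x'.length n < (a ++ x ++ x' ++ b).length} :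
    (a ++ x ++ x' ++ b)[swapIdx a.length x.length x'.length n]
      = (a ++ x' ++ x ++ b)[n] := by
  have hn' : n < a.length + x'.length + x.length + b.length := by
    simp only [List.length_append] at hn; omega
  rcases lt_or_ge n a.length with h1 | h1
  · simp only [show swapIdx a.length x.length x'.length n = n from by unfold swapIdx; split_ifs <;> omega]
    rw [get4_a a x x' b h1, get4_a a x' x b h1]
  rcases lt_or_ge n (a.length + x'.length) with h2 | h2
  · simp only [show swapIdx a.length x.length x'.length n = n + x.length from by
      unfold swapIdx; split_ifs <;> omega]
    rw [get4_x' a x x' b (by omega) (by omega), get4_x a x' x b h1 h2]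
    simp only [show n + x.length - (a.length + x.length) = n - a.length from by omega]
  rcases lt_or_ge n (a.length + x'.length + x.length) with h3 | h3
  · simp only [show swapIdx a.length x.length x'.length n = n - x'.length from by
      unfold swapIdx; split_ifs <;> omega]
    rw [get4_x a x x' b (by omega) (by omega), get4_x' a x' x b (by omega) (by omega)]
    simp only [show n - x'.length - a.length = n - (a.length + x'.length) from by omega]
  · simp only [show swapIdx a.length x.length x'.length n = n from by unfold swapIdx; split_ifs <;> omega]
    rw [get4_b a x x' b (by omega), get4_b a x' x b (by omega)]
    simp only [show n - (a.length + (x.length + x'.length))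
        = n - (a.length + (x'.length + x.length)) from by omega]

end Aux2

lemma mem_posList_out {tx : Tx α β V} {l : List (Tx α β V)} (htx : tx ∈ l)
    {o : ℕ × β × V} (ho : o ∈ tx.outputs) : o.1 ∈ posList l :=
  ⟨tx, htx, Or.inr ⟨o, ho, rfl⟩⟩

lemma mem_posList_in {tx : Tx α β V} {l : List (Tx α β V)} (htx : tx ∈ l)
    {i : ℕ × α} (hi : i ∈ tx.inputs) : i.1 ∈ posList l :=
  ⟨tx, htx, Or.inl ⟨i, hi, rfl⟩⟩

theorem isChunk_swap (val : V → β → Tx α β V → (ℕ × α) → Prop)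
    (a x x' b : List (Tx α β V))
    (hd : ∀ p, p ∈ posList x → p ∉ posList x')
    (h : IsChunk val (a ++ x ++ x' ++ b)) :
    IsChunk val (a ++ x' ++ x ++ b) := by
  simp only [IsChunk, List.get_eq_getElem] at h ⊢
  obtain ⟨c1, c2, c3⟩ := h
  have hg : ∀ n, n < (a ++ x' ++ x ++ b).length →
      swapIdx a.length x.length x'.length n < (a ++ x ++ x' ++ b).length := by
    intro n hn
    simp only [List.length_append] at hn ⊢
    exact swapIdx_lt hn
  refine ⟨?_, ?_, ?_⟩
  · intro m n hm hn o ho o' ho' hp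
    have em := getElem_swapIdx a x x' b hm (hh := hg m hm)
    have en := getElem_swapIdx a x x' b hn (hh := hg n hn)
    obtain ⟨he, heo⟩ := c1 _ _ (hg m hm) (hg n hn) o (by rw [em]; exact ho)
      o' (by rw [en]; exact ho') hp
    exact ⟨swapIdx_inj he, heo⟩
  · intro m n hm hn i hi i' hi' hp
    have em := getElem_swapIdx a x x' b hm (hh := hg m hm)
    have en := getElem_swapIdx a x x' b hn (hh := hg n hn)
    obtain ⟨he, hei⟩ := c2 _ _ (hg m hm) (hg n hn) i (by rw [em]; exact hi)
      i' (by rw [en]; exact hi') hp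
    exact ⟨swapIdx_inj he, hei⟩
  · intro m n hm hn i hi o ho hp
    have em := getElem_swapIdx a x x' b hm (hh := hg m hm)
    have en := getElem_swapIdx a x x' b hn (hh := hg n hn)
    obtain ⟨hlt, hval⟩ := c3 _ _ (hg m hm) (hg n hn) i (by rw [em]; exact hi)
      o (by rw [en]; exact ho) hp
    rw [em] at hval
    refine ⟨?_, hval⟩
    rcases swapIdx_order hlt with h | ⟨hn1, hn2, hm1, hm2⟩
    · exact h
    · -- impossible: o is an output of a tx in x, i an input of a tx in x',
      -- with the same position
      exfalso
      have hxm : (a ++ x' ++ x ++ b)[m] ∈ x' := by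
        rw [get4_x a x' x b hm1 hm2]; exact List.getElem_mem _
      have hxn : (a ++ x' ++ x ++ b)[n] ∈ x := by
        rw [get4_x' a x' x b (by omega) (by simpa [List.length_append] using hn2)]
        exact List.getElem_mem _
      exact hd o.1 (mem_posList_out hxn ho) (hp ▸ mem_posList_in hxm hi)


theorem blockchain_disjoint (val : V → β → Tx α β V → (ℕ × α) → Prop)
    (y x x' : List (Tx α β V))
    (hc : IsChunk val (y ++ x ++ x'))
    (hu : utxi (y ++ x') = ∅) :
    ∀ p, p ∈ posList x → p ∉ posList x' := by
  intro p hp hp'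
  simp only [posList, posTx, inputPos, outputPos, Set.mem_setOf_eq,
    Set.mem_union] at hp hp'
  obtain ⟨tx1, htx1, hp1⟩ := hp
  obtain ⟨tx2, htx2, hp2⟩ := hp'
  obtain ⟨k, hk, rfl⟩ := List.mem_iff_getElem.mp htx1
  obtain ⟨k', hk', rfl⟩ := List.mem_iff_getElem.mp htx2
  simp only [IsChunk, List.get_eq_getElem] at hc
  obtain ⟨c1, c2, c3⟩ := hc
  have hm1 : y.length + k < (y ++ x ++ x').length := by simp; omega
  have hm2 : y.length + x.length + k' < (y ++ x ++ x').length := by simp; omega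
  have e1 : (y ++ x ++ x')[y.length + k]'hm1 = x[k] := by
    rw [get3_x y x x' (by omega) (by omega)]
    simp only [show y.length + k - y.length = k from by omega]
  have e2 : (y ++ x ++ x')[y.length + x.length + k']'hm2 = x'[k'] := by
    rw [get3_d y x x' (by omega)]
    simp only [show y.length + x.length + k' - (y.length + x.length) = k' from by
      omega]
  rcases hp1 with ⟨i1, hi1, hq1⟩ | ⟨o1, ho1, hq1⟩ <;>
    rcases hp2 with ⟨i2, hi2, hq2⟩ | ⟨o2, ho2, hq2⟩
  · -- input / input
    have h := (c2 (y.length + k) (y.length + x.length + k') hm1 hm2 i1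
      (by rw [e1]; exact hi1) i2 (by rw [e2]; exact hi2) (hq1.trans hq2.symm)).1
    omega
  · -- input of x / output of x'
    have h := (c3 (y.length + k) (y.length + x.length + k') hm1 hm2 i1
      (by rw [e1]; exact hi1) o2 (by rw [e2]; exact ho2) (hq1.trans hq2.symm)).1
    omega
  · -- output of x / input of x' : use the blockchain property of y ++ x'
    have hne := Set.eq_empty_iff_forall_notMem.mp hu p
    simp only [utxi, Set.mem_setOf_eq, List.get_eq_getElem] at hne
    push_neg at hne
    have hm' : y.length + k' < (y ++ x').length := by simp; omega
    have e3 : (y ++ x')[y.length + k']'hm' = x'[k'] := by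
      rw [List.getElem_append_right (by omega)]
      simp
    obtain ⟨n, hn, hlt, o', ho', hq'⟩ :=
      hne (y.length + k') hm' i2 (by rw [e3]; exact hi2) hq2
    rcases lt_or_ge n y.length with hny | hny
    · have e5 : (y ++ x')[n]'hn = y[n]'hny := List.getElem_append_left hny
      have h := (c1 n (y.length + k) (by simp; omega) hm1 o'
        (by rw [get3_a y x x' hny, ← e5]; exact ho')
        o1 (by rw [e1]; exact ho1) (hq'.trans hq1.symm)).1
      omega
    · have hnY : n - y.length < x'.length := by simp at hn; omega
      have e5 : (y ++ x')[n]'hn = x'[n - y.length]'hnY :=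
        List.getElem_append_right hny
      have hm3 : n + x.length < (y ++ x ++ x').length := by
        simp at hn ⊢; omega
      have e6 : (y ++ x ++ x')[n + x.length]'hm3 = x'[n - y.length]'hnY := by
        rw [get3_d y x x' (by omega)]
        simp only [show n + x.length - (y.length + x.length) = n - y.length from by
          omega]
      have h := (c1 (n + x.length) (y.length + k) hm3 hm1 o'
        (by rw [e6, ← e5]; exact ho')
        o1 (by rw [e1]; exact ho1) (hq'.trans hq1.symm)).1
      omega
  · -- output / output
    have h := (c1 (y.length + k) (y.length + x.length + k') hm1 hm2 o1
      (by rw [e1]; exact ho1) o2 (by rw [e2]; exact ho2) (hq1.trans hq2.symm)).1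
    omega

/-- **Statement 10.** If `y ++ x'` and `y ++ x ++ x'` are blockchains (chunks with
no unspent inputs) then the chunks `x` and `x'` commute. -/
theorem blockchain_commute (val : V → β → Tx α β V → (ℕ × α) → Prop)
    (y x x' : List (Tx α β V))
    (hy : IsChunk val y) (hx : IsChunk val x) (hx' : IsChunk val x')
    (h1 : IsChunk val (y ++ x') ∧ utxi (y ++ x') = ∅)
    (h2 : IsChunk val (y ++ x ++ x') ∧ utxi (y ++ x ++ x') = ∅) :
    Commuting val x x' := by
  have hd : ∀ p, p ∈ posList x → p ∉ posList x' :=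
    blockchain_disjoint val y x x' h2.1 h1.2
  have hd' : ∀ p, p ∈ posList x' → p ∉ posList x := fun p h h' => hd p h' h
  intro z
  refine ⟨⟨fun h => ?_, fun h => ?_⟩, ⟨fun h => ?_, fun h => ?_⟩⟩
  · simpa using isChunk_swap val [] x x' z hd (by simpa using h)
  · simpa using isChunk_swap val [] x' x z hd' (by simpa using h)
  · simpa using isChunk_swap val z x x' [] hd (by simpa using h)
  · simpa using isChunk_swap val z x' x [] hd' (by simpa using h)
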